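/- arXiv:1710.01471 — 6 statements merged into one kernel-verified Lean document; each statement's English description precedes it below -/
import Mathlib

section
/- For every integer n ≥ 5, the maximum number of edges in a graph on n vertices containing no bowtie (two triangles sharing exactly one vertex) is ⌊n²/4⌋ + 1. -/
open Finset

/-- A bowtie in `G` with centre `c` and triangles `c a b`, `c d e`. -/
def IsBowtie {V : Type*} (G : SimpleGraph V) (c a b d e : V) : Prop :=
  G.Adj c a ∧ G.Adj c b ∧ G.Adj a b ∧ G.Adj c d ∧ G.Adj c e ∧ G.Adj d e ∧
  a ≠ d ∧ a ≠ e ∧ b ≠ d ∧ b ≠ e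

/-- The number of bowtie subgraphs of `G`: each bowtie subgraph corresponds to
exactly 8 ordered tuples `(c,a,b,d,e)`. -/
noncomputable def bowtieCount {V : Type*} (G : SimpleGraph V) : ℕ :=
  Nat.card {t : V × V × V × V × V //
    IsBowtie G t.1 t.2.1 t.2.2.1 t.2.2.2.1 t.2.2.2.2} / 8

/-- The edge set of the bowtie on `(c,a,b,d,e)`. -/
def btEdges {V : Type*} (c a b d e : V) : Set (Sym2 V) :=
  {s(c,a), s(c,b), s(a,b), s(c,d), s(c,e), s(d,e)}

/-- The number of bowtie subgraphs of `G` containing both edges `f₁` and `f₂`. -/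
noncomputable def bowtieCountThru2 {V : Type*} (G : SimpleGraph V) (f₁ f₂ : Sym2 V) : ℕ :=
  Nat.card {t : V × V × V × V × V //
    IsBowtie G t.1 t.2.1 t.2.2.1 t.2.2.2.1 t.2.2.2.2 ∧
    f₁ ∈ btEdges t.1 t.2.1 t.2.2.1 t.2.2.2.1 t.2.2.2.2 ∧
    f₂ ∈ btEdges t.1 t.2.1 t.2.2.1 t.2.2.2.1 t.2.2.2.2} / 8

/-- The number of bowtie subgraphs of `G` containing the edge `f`. -/
noncomputable def bowtieCountThru1 {V : Type*} (G : SimpleGraph V) (f : Sym2 V) : ℕ :=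
  Nat.card {t : V × V × V × V × V //
    IsBowtie G t.1 t.2.1 t.2.2.1 t.2.2.2.1 t.2.2.2.2 ∧
    f ∈ btEdges t.1 t.2.1 t.2.2.1 t.2.2.2.1 t.2.2.2.2} / 8

/-- The number of edges of `G`. -/
noncomputable def edgeCount {V : Type*} (G : SimpleGraph V) : ℕ := Nat.card G.edgeSet

/-- The degree of `v` in `G`. -/
noncomputable def nbrDeg {V : Type*} (G : SimpleGraph V) (v : V) : ℕ :=
  Nat.card {w // G.Adj v w}

/-- The number of neighbours of `v` lying in the same part of the
partition `{V₁, V₁ᶜ}` as `v` (the "bad degree"). -/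
noncomputable def sameDeg {V : Type*} (G : SimpleGraph V) (V₁ : Finset V) (v : V) : ℕ :=
  Nat.card {w // G.Adj v w ∧ (w ∈ V₁ ↔ v ∈ V₁)}

/-- The number of edges of `G` with both endpoints in `S`. -/
noncomputable def insideEdges {V : Type*} (G : SimpleGraph V) (S : Finset V) : ℕ :=
  Nat.card {e : Sym2 V // e ∈ G.edgeSet ∧ ∀ x ∈ e, x ∈ S}

/-- `hF n q`: the minimum number of bowtie subgraphs over graphs on `n`
vertices with `ex(n,F) + q = ⌊n²/4⌋ + 1 + q` edges. -/
noncomputable def hF (n q : ℕ) : ℕ :=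
  sInf {k | ∃ G : SimpleGraph (Fin n), edgeCount G = n ^ 2 / 4 + 1 + q ∧ bowtieCount G = k}

/-!
Lower bound: add to the Turán graph `T(n, 2)` one edge inside a part. Every triangle then contains
that edge, so no two triangles share exactly one vertex.

Upper bound, by induction on `n ≥ 5`: as `⌊n²/4⌋ - ⌊(n-1)²/4⌋ = ⌊n/2⌋`, it suffices to delete a
vertex of degree at most `⌊n/2⌋`. If there is none (and `n ≥ 6`), every edge lies in a triangle and
every degree is at least `4`. In a bowtie-free graph the link of a vertex `u` has no two disjoint
edges; having no isolated vertex and at least four vertices, it is a star with some centre `v`. For a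
common neighbour `w` of `u` and `v`, a further neighbour of `u` and one of `w` close triangles with
`v` on disjoint pairs `{u, a}` and `{w, b}`: a bowtie centred at `v`. For `n = 5`, a vertex `u` of
degree `4` has such a centre `v` again, and every edge meets `u` or `v`, giving at most
`4 + 4 - 1 = 7` edges.
-/

theorem Nat.add_one_sq_div_four (n : ℕ) : (n + 1) ^ 2 / 4 = n ^ 2 / 4 + (n + 1) / 2 := by
  rcases Nat.even_or_odd' n with ⟨k, rfl | rfl⟩
  · have h₁ : (2 * k + 1) ^ 2 = 4 * (k ^ 2 + k) + 1 := by ring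
    have h₂ : (2 * k) ^ 2 = 4 * k ^ 2 := by ring
    omega
  · have h₁ : (2 * k + 1 + 1) ^ 2 = 4 * (k ^ 2 + 2 * k + 1) := by ring
    have h₂ : (2 * k + 1) ^ 2 = 4 * (k ^ 2 + k) + 1 := by ring
    omega

namespace SimpleGraph

variable {V : Type*} {G : SimpleGraph V}

def BowtieFree (G : SimpleGraph V) : Prop := ∀ c a b d e, ¬ IsBowtie G c a b d e

theorem exists_adj_notMem [G.LocallyFinite] {u : V} {s : Finset V} (h : #s < G.degree u) :
    ∃ x, G.Adj u x ∧ x ∉ s := by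
  rw [← card_neighborFinset_eq_degree] at h
  obtain ⟨x, hx, hxs⟩ := exists_mem_notMem_of_card_lt_card h
  exact ⟨x, (mem_neighborFinset G u x).1 hx, hxs⟩

namespace BowtieFree

theorem triangles_meet (hG : BowtieFree G) {c a b d e : V} (hca : G.Adj c a) (hcb : G.Adj c b)
    (hab : G.Adj a b) (hcd : G.Adj c d) (hce : G.Adj c e) (hde : G.Adj d e) :
    a = d ∨ a = e ∨ b = d ∨ b = e := by
  by_contra! h
  exact hG c a b d e ⟨hca, hcb, hab, hcd, hce, hde, h⟩

theorem eq_or_eq_of_three_common_adj (hG : BowtieFree G) {u v y₁ y₂ y₃ : V} (huv : G.Adj u v)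
    (h₁ : G.Adj u y₁ ∧ G.Adj v y₁) (h₂ : G.Adj u y₂ ∧ G.Adj v y₂) (h₃ : G.Adj u y₃ ∧ G.Adj v y₃)
    (h₁₂ : y₁ ≠ y₂) (h₁₃ : y₁ ≠ y₃) (h₂₃ : y₂ ≠ y₃) {x t : V} (hux : G.Adj u x)
    (hut : G.Adj u t) (hxt : G.Adj x t) : x = v ∨ t = v := by
  have m₁ := hG.triangles_meet huv h₁.1 h₁.2 hux hut hxt
  have m₂ := hG.triangles_meet huv h₂.1 h₂.2 hux hut hxt
  have m₃ := hG.triangles_meet huv h₃.1 h₃.2 hux hut hxt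
  grind

theorem exists_link_center [G.LocallyFinite] (hG : BowtieFree G) {u : V} (hu : 4 ≤ G.degree u)
    (htri : ∀ x, G.Adj u x → ∃ t, G.Adj u t ∧ G.Adj x t) :
    ∃ v, G.Adj u v ∧ ∀ ⦃x t⦄, G.Adj u x → G.Adj u t → G.Adj x t → x = v ∨ t = v := by
  classical
  obtain ⟨v₀, huv₀⟩ := (G.degree_pos_iff_exists_adj u).1 (by omega)
  obtain ⟨w₀, huw₀, hvw₀⟩ := htri v₀ huv₀
  obtain ⟨a, hua, ha⟩ := G.exists_adj_notMem (s := {v₀, w₀}) (u := u)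
    (by grw [card_le_two]; omega)
  obtain ⟨v, w, huv, huw, hvw, hav, haw, hva⟩ : ∃ v w, G.Adj u v ∧ G.Adj u w ∧ G.Adj v w ∧
      a ≠ v ∧ a ≠ w ∧ G.Adj v a := by
    obtain ⟨t, hut, hat⟩ := htri a hua
    have := hG.triangles_meet huv₀ huw₀ hvw₀ hua hut hat
    simp only [mem_insert, mem_singleton, not_or] at ha
    rcases this with h | h | h | h
    · exact absurd h.symm ha.1
    · subst h; exact ⟨v₀, w₀, hut, huw₀, hvw₀, ha.1, ha.2, hat.symm⟩
    · exact absurd h.symm ha.2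
    · subst h; exact ⟨w₀, v₀, hut, huv₀, hvw₀.symm, ha.2, ha.1, hat.symm⟩
  obtain ⟨b, hub, hb⟩ := G.exists_adj_notMem (s := {v, w, a}) (u := u)
    (by grw [card_le_three]; omega)
  simp only [mem_insert, mem_singleton, not_or] at hb
  have hvb : G.Adj v b := by
    obtain ⟨t, hut, hbt⟩ := htri b hub
    have m₁ := hG.triangles_meet huv huw hvw hub hut hbt
    have m₂ := hG.triangles_meet huv hua hva hub hut hbt
    have htv : t = v := by grind
    exact htv ▸ hbt.symm
  exact ⟨v, huv, fun x t => hG.eq_or_eq_of_three_common_adj huv ⟨huw, hvw⟩ ⟨hua, hva⟩ ⟨hub, hvb⟩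
    (Ne.symm haw) (by grind) (by grind)⟩

theorem exists_degree_lt_four [G.LocallyFinite] [Nonempty V] (hG : BowtieFree G)
    (htri : ∀ ⦃u x⦄, G.Adj u x → ∃ t, G.Adj u t ∧ G.Adj x t) : ∃ v, G.degree v < 4 := by
  classical
  by_contra! hdeg
  obtain ⟨u⟩ := ‹Nonempty V›
  obtain ⟨v, huv, hlink⟩ := hG.exists_link_center (hdeg u) fun _ hux => htri hux
  have adj_center {x} (hux : G.Adj u x) (hxv : x ≠ v) : G.Adj x v := by
    obtain ⟨t, hut, hxt⟩ := htri hux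
    obtain h | rfl := hlink hux hut hxt
    · exact absurd h hxv
    · exact hxt
  obtain ⟨w, huw, hvw⟩ := htri huv
  have hwv : w ≠ v := (G.ne_of_adj hvw).symm
  have common_uw {t} (hut : G.Adj u t) (hwt : G.Adj w t) : t = v :=
    (hlink huw hut hwt).resolve_left hwv
  obtain ⟨a, hua, ha⟩ := G.exists_adj_notMem (s := {v, w}) (u := u)
    (by grw [card_le_two]; linarith [hdeg u])
  obtain ⟨b, hwb, hb⟩ := G.exists_adj_notMem (s := {u, v}) (u := w)
    (by grw [card_le_two]; linarith [hdeg w])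
  simp only [mem_insert, mem_singleton, not_or] at ha hb
  have hbv : G.Adj b v := by
    obtain ⟨s, hws, hbs⟩ := htri hwb
    rcases hG.triangles_meet huw.symm hvw.symm huv hwb hws hbs with h | h | h | h
    · exact absurd h.symm hb.1
    · subst h
      exact absurd (common_uw hbs.symm hwb) hb.2
    · exact absurd h.symm hb.2
    · exact h ▸ hbs
  have hab : a ≠ b := fun h => ha.1 (common_uw hua (h ▸ hwb))
  exact hG v u a w b ⟨huv.symm, (adj_center hua ha.1).symm, hua, hvw, hbv.symm, hwb,
    G.ne_of_adj huw, Ne.symm hb.1, ha.2, hab⟩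

theorem comap {W : Type*} (hG : BowtieFree G) (f : W ↪ V) : BowtieFree (G.comap f) :=
  fun _ _ _ _ _ ⟨hca, hcb, hab, hcd, hce, hde, had, hae, hbd, hbe⟩ =>
    hG _ _ _ _ _ ⟨hca, hcb, hab, hcd, hce, hde, f.injective.ne had, f.injective.ne hae,
      f.injective.ne hbd, f.injective.ne hbe⟩

end BowtieFree

theorem mem_of_adj_sup_edge (hG : G.CliqueFree 3) {a b x y z : V}
    (hxy : (G ⊔ edge a b).Adj x y) (hxz : (G ⊔ edge a b).Adj x z)
    (hyz : (G ⊔ edge a b).Adj y z) : (a = x ∨ a = y ∨ a = z) ∧ (b = x ∨ b = y ∨ b = z) := by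
  simp only [sup_adj, edge_adj] at hxy hxz hyz
  rcases hxy with hxy | hxy
  · rcases hxz with hxz | hxz
    · rcases hyz with hyz | hyz
      · classical exact absurd (is3Clique_triple_iff.2 ⟨hxy, hxz, hyz⟩) (hG _)
      · grind
    · grind
  · grind

theorem bowtieFree_sup_edge (hG : G.CliqueFree 3) {a b : V} (hab : a ≠ b) :
    BowtieFree (G ⊔ edge a b) := by
  rintro c x y d e ⟨hcx, hcy, hxy, hcd, hce, hde, hxd, hxe, hyd, hye⟩
  have h₁ := mem_of_adj_sup_edge hG hcx hcy hxy
  have h₂ := mem_of_adj_sup_edge hG hcd hce hde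
  grind

theorem card_edgeFinset_turanGraph_two (n : ℕ) : #(turanGraph n 2).edgeFinset = n ^ 2 / 4 := by
  rw [card_edgeFinset_turanGraph]
  rcases Nat.even_or_odd' n with ⟨k, rfl | rfl⟩
  · simp [Nat.mul_mod_right]
  · have : (2 * k + 1) ^ 2 = 4 * (k ^ 2 + k) + 1 := by ring
    simp [this, Nat.add_mod]
    omega

theorem edgeCount_eq_card_edgeFinset [Fintype G.edgeSet] : edgeCount G = #G.edgeFinset := by
  rw [edgeCount, Nat.card_eq_fintype_card, edgeFinset_card]

theorem exists_bowtieFree_edgeCount_eq {n : ℕ} (hn : 3 ≤ n) :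
    ∃ G : SimpleGraph (Fin n), BowtieFree G ∧ edgeCount G = n ^ 2 / 4 + 1 := by
  classical
  refine ⟨turanGraph n 2 ⊔ edge ⟨0, by omega⟩ ⟨2, by omega⟩,
    bowtieFree_sup_edge (turanGraph_cliqueFree two_pos) (by simp), ?_⟩
  rw [edgeCount_eq_card_edgeFinset,
    card_edgeFinset_sup_edge (G := turanGraph n 2) (by simp [turanGraph_adj]) (by simp),
    card_edgeFinset_turanGraph_two]

section Finite

variable [Fintype V] [DecidableRel G.Adj]

theorem card_edgeFinset_eq_card_induce_add_degree [DecidableEq V] (x : V) :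
    #G.edgeFinset = #(G.induce {x}ᶜ).edgeFinset + G.degree x := by
  rw [card_edgeFinset_induce_compl_singleton, card_edgeFinset_deleteIncidenceSet,
    Nat.sub_add_cancel (G.degree_le_card_edgeFinset x)]

theorem exists_common_adj_of_card_lt {u v : V}
    (h : Fintype.card V < G.degree u + G.degree v) : ∃ w, G.Adj u w ∧ G.Adj v w := by
  classical
  rw [← card_neighborFinset_eq_degree, ← card_neighborFinset_eq_degree, ← card_univ] at h
  obtain ⟨w, hw⟩ := inter_nonempty_of_card_lt_card_add_card (subset_univ _) (subset_univ _) h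
  simp only [mem_inter, mem_neighborFinset] at hw
  exact ⟨w, hw⟩

theorem BowtieFree.card_edgeFinset_le_seven (hG : BowtieFree G) (hV : Fintype.card V = 5) :
    #G.edgeFinset ≤ 7 := by
  classical
  by_contra! hcard
  have hmin (x : V) : 2 ≤ G.degree x := by
    by_contra! hx
    have hcompl : Fintype.card ↥({x}ᶜ : Set V) = 4 := by
      rw [Fintype.card_compl_set, hV, Set.card_singleton]
    have hind := (G.induce {x}ᶜ).card_edgeFinset_le_card_choose_two
    rw [hcompl, show Nat.choose 4 2 = 6 from rfl] at hind
    have := G.card_edgeFinset_eq_card_induce_add_degree x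
    omega
  obtain ⟨u, hu⟩ : ∃ u, 4 ≤ G.degree u := by
    by_contra! hdeg
    have := G.sum_degrees_eq_twice_card_edges
    have : ∑ v, G.degree v ≤ ∑ _v : V, 3 := sum_le_sum fun v _ => Nat.le_of_lt_succ (hdeg v)
    simp [hV] at this
    omega
  have huniv : G.IsUniversal u := by
    rw [← degree_eq_card_sub_one]
    have := G.degree_lt_card_verts u
    omega
  obtain ⟨v, huv, hlink⟩ := hG.exists_link_center hu fun x hux => by
    obtain ⟨t, hxt, htu⟩ := G.exists_adj_notMem (s := {u}) (u := x)
      (by rw [card_singleton]; exact hmin x)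
    exact ⟨t, huniv (Ne.symm (by simpa using htu)), hxt⟩
  have hsub : G.edgeFinset ⊆ G.incidenceFinset u ∪ G.incidenceFinset v := by
    intro e he
    induction e with
    | _ x y =>
      have hxy : G.Adj x y := by simpa using he
      simp only [mem_union, mem_incidenceFinset, mk'_mem_incidenceSet_iff, hxy, true_and]
      by_cases hx : u = x
      · tauto
      by_cases hy : u = y
      · tauto
      rcases hlink (huniv hx) (huniv hy) hxy with rfl | rfl <;> tauto
  have hinter : s(u, v) ∈ G.incidenceFinset u ∩ G.incidenceFinset v := by
    simp [mem_incidenceFinset, incidenceSet, huv]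
  have := card_union_add_card_inter (G.incidenceFinset u) (G.incidenceFinset v)
  have := card_pos.2 ⟨_, hinter⟩
  have := card_le_card hsub
  have := G.degree_lt_card_verts u
  have := G.degree_lt_card_verts v
  simp only [card_incidenceFinset_eq_degree] at *
  omega

theorem BowtieFree.card_edgeFinset_le (hG : BowtieFree G) (hV : 5 ≤ Fintype.card V) :
    #G.edgeFinset ≤ Fintype.card V ^ 2 / 4 + 1 := by
  classical
  obtain ⟨n, hn⟩ : ∃ n, Fintype.card V = n := ⟨_, rfl⟩
  rw [hn] at hV ⊢
  induction n, hV using Nat.le_induction generalizing V with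
  | base => exact hG.card_edgeFinset_le_seven hn
  | succ n h5 ih =>
    by_cases hsmall : ∃ x, G.degree x ≤ (n + 1) / 2
    · obtain ⟨x, hx⟩ := hsmall
      have hind := ih (G := G.induce {x}ᶜ) (hG.comap (Function.Embedding.subtype _))
        (by rw [Fintype.card_compl_set, hn, Set.card_singleton, Nat.add_sub_cancel])
      rw [G.card_edgeFinset_eq_card_induce_add_degree x, Nat.add_one_sq_div_four]
      omega
    · push Not at hsmall
      have : Nonempty V := Fintype.card_pos_iff.1 (by omega)
      obtain ⟨v, hv⟩ := hG.exists_degree_lt_four fun u x _ =>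
        exists_common_adj_of_card_lt (by have := hsmall u; have := hsmall x; omega)
      have := hsmall v
      omega

end Finite

end SimpleGraph

theorem turan_number_of_bowtie (n : ℕ) (hn : 5 ≤ n) :
    IsGreatest {m : ℕ | ∃ G : SimpleGraph (Fin n),
      (∀ c a b d e : Fin n, ¬ IsBowtie G c a b d e) ∧ edgeCount G = m}
      (n ^ 2 / 4 + 1) := by
  classical
  refine ⟨SimpleGraph.exists_bowtieFree_edgeCount_eq (by omega), ?_⟩
  rintro m ⟨G, hG, rfl⟩
  rw [SimpleGraph.edgeCount_eq_card_edgeFinset]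
  simpa using SimpleGraph.BowtieFree.card_edgeFinset_le hG (by simpa using hn)
end

section
/- For any integers k ≥ m ≥ 0, there exists a triangle-free graph on 4k+1 vertices in which exactly one vertex has degree 2m and the remaining 4k vertices each have degree k. -/
open Finset

/-!
Take a vertex `u` and four classes `A₀, B₀, A₁, B₁` of `k` vertices each, indexed by `Fin k`,
placed around a five-cycle `u – A₀ – B₀ – A₁ – B₁ – u`. Join `Aₚ` to `Bₚ` completely, except
for the matching `aₜbₜ` with `t < m`; join `B₀` to `A₁` by exactly that matching, i.e. `b₀ₜa₁ₜ`
for `t < m`; and join `u` to `a₀ₜ` and `b₁ₜ` for `t < m`. Each vertex of index `t < m` trades its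
missing matching edge for one new edge, so it keeps degree `k`, while `u` gets degree `2m`.
Every edge joins consecutive classes of the five-cycle, so the graph maps homomorphically to
`C₅` and is therefore triangle-free.
-/

open SimpleGraph Function

theorem SimpleGraph.CliqueFree.of_hom {V W : Type*} {G : SimpleGraph V} {H : SimpleGraph W}
    {n : ℕ} (f : G →g H) (h : H.CliqueFree n) : G.CliqueFree n := by
  rw [cliqueFree_iff] at h ⊢
  exact ⟨fun c => h.false ((f.comp c.toHom).toCopy (Hom.injective_of_top_hom _))⟩

theorem SimpleGraph.cycleGraph_five_cliqueFree_three : (cycleGraph 5).CliqueFree 3 := by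
  unfold CliqueFree
  decide

section nbrDeg

variable {V W : Type*} {G : SimpleGraph V} {H : SimpleGraph W}

theorem nbrDeg_eq_card_of_neighborSet_eq_range {ι : Type*} {v : V} {f : ι → V}
    (hf : Injective f) (hN : G.neighborSet v = Set.range f) : nbrDeg G v = Nat.card ι := by
  rw [← Nat.card_range_of_injective hf, ← hN]
  rfl

theorem SimpleGraph.Iso.nbrDeg_apply (φ : G ≃g H) (v : V) : nbrDeg H (φ v) = nbrDeg G v :=
  (Nat.card_congr (φ.toEquiv.subtypeEquiv fun _ => φ.map_adj_iff.symm)).symm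

end nbrDeg

namespace OneSpecialVertex

variable (k m : ℕ)

abbrev Vertex := Option (Fin 4 × Fin k)

theorem card_vertex : Fintype.card (Vertex k) = 4 * k + 1 := by
  simp [Fintype.card_option, Fintype.card_prod]

/-- `none` is `u`, and `some (i, t)` is the `t`-th vertex of the class at position `i + 1` on
the five-cycle `u – A₀ – B₀ – A₁ – B₁ – u`; `Step x y` says that `y` follows `x` on it. -/
def Step : Vertex k → Vertex k → Prop
  | none, some (0, t) => t < m
  | some (0, t), some (1, t') => t = t' → m ≤ t
  | some (1, t), some (2, t') => t = t' ∧ t < m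
  | some (2, t), some (3, t') => t = t' → m ≤ t
  | some (3, t), none => t < m
  | _, _ => False

def level : Vertex k → Fin 5
  | none => 0
  | some (i, _) => i.succ

theorem level_sub_level_of_step {x y : Vertex k} (h : Step k m x y) :
    level k y - level k x = 1 := by
  match x, y, h with
  | none, some (0, _), _ | some (0, _), some (1, _), _ | some (1, _), some (2, _), _
  | some (2, _), some (3, _), _ | some (3, _), none, _ => rfl

def graph : SimpleGraph (Vertex k) where
  Adj x y := Step k m x y ∨ Step k m y x
  symm := ⟨fun _ _ => Or.symm⟩
  loopless := ⟨fun _ h => by obtain h | h := h <;> simpa using level_sub_level_of_step k m h⟩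

def levelHom : graph k m →g cycleGraph 5 where
  toFun := level k
  map_rel' := by
    rintro x y (h | h)
    · exact Or.inr (level_sub_level_of_step k m h)
    · exact Or.inl (level_sub_level_of_step k m h)

theorem cliqueFree_graph : (graph k m).CliqueFree 3 :=
  cycleGraph_five_cliqueFree_three.of_hom (levelHom k m)

def mate : Fin 4 → Fin 4
  | 0 => 1
  | 1 => 0
  | 2 => 3
  | 3 => 2

/-- The neighbour that replaces the missing matching edge at a vertex of index `t < m`. -/
def rewiredNeighbor : Fin 4 × Fin k → Vertex k
  | (0, _) => none
  | (1, t) => some (2, t)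
  | (2, t) => some (1, t)
  | (3, _) => none

def neighbor (x : Fin 4 × Fin k) (s : Fin k) : Vertex k :=
  if s = x.2 ∧ x.2 < m then rewiredNeighbor k x else some (mate x.1, s)

theorem neighbor_injective (x : Fin 4 × Fin k) : Injective (neighbor k m x) := by
  obtain ⟨i, t⟩ := x
  intro s s' h
  fin_cases i <;> simp only [neighbor, rewiredNeighbor, mate] at h <;> split_ifs at h <;>
    simp_all

theorem neighborSet_some (x : Fin 4 × Fin k) :
    (graph k m).neighborSet (some x) = Set.range (neighbor k m x) := by
  obtain ⟨i, t⟩ := x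
  ext (_ | ⟨j, t'⟩) <;> [fin_cases i; (fin_cases i <;> fin_cases j)] <;>
    simp [graph, Step, neighbor, rewiredNeighbor, mate, ite_eq_iff] <;> grind

theorem nbrDeg_some (x : Fin 4 × Fin k) : nbrDeg (graph k m) (some x) = k := by
  rw [nbrDeg_eq_card_of_neighborSet_eq_range (neighbor_injective k m x) (neighborSet_some k m x),
    Nat.card_eq_fintype_card, Fintype.card_fin]

variable {k m}

def hubNeighbor (hm : m ≤ k) : Bool × Fin m → Vertex k
  | (false, s) => some (0, s.castLE hm)
  | (true, s) => some (3, s.castLE hm)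

theorem hubNeighbor_injective (hm : m ≤ k) : Injective (hubNeighbor hm) := by
  rintro ⟨_ | _, s⟩ ⟨_ | _, s'⟩ h <;> simp_all [hubNeighbor, Fin.ext_iff]

theorem neighborSet_none (hm : m ≤ k) :
    (graph k m).neighborSet none = Set.range (hubNeighbor hm) := by
  ext (_ | ⟨j, t⟩) <;> [skip; fin_cases j] <;>
    simp [graph, Step, hubNeighbor, Fin.ext_iff] <;>
    exact ⟨fun ht => ⟨⟨t, ht⟩, rfl⟩, by rintro ⟨b, hb⟩; omega⟩

theorem nbrDeg_none (hm : m ≤ k) : nbrDeg (graph k m) none = 2 * m := by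
  rw [nbrDeg_eq_card_of_neighborSet_eq_range (hubNeighbor_injective hm) (neighborSet_none hm),
    Nat.card_eq_fintype_card]
  simp [two_mul]

end OneSpecialVertex

open OneSpecialVertex in
theorem exists_trianglefree_one_special_vertex (k m : ℕ) (h : m ≤ k) :
    ∃ (G : SimpleGraph (Fin (4 * k + 1))) (u : Fin (4 * k + 1)),
      G.CliqueFree 3 ∧ nbrDeg G u = 2 * m ∧ ∀ v, v ≠ u → nbrDeg G v = k := by
  let φ := (graph k m).overFinIso (card_vertex k)
  refine ⟨(graph k m).overFin (card_vertex k), φ none, ?_, ?_, fun v hv => ?_⟩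
  · exact (cliqueFree_graph k m).of_hom φ.symm.toRelEmbedding.toRelHom
  · rw [φ.nbrDeg_apply, nbrDeg_none h]
  · obtain ⟨x, hx⟩ : ∃ x, φ.symm v = some x :=
      Option.ne_none_iff_exists'.mp fun hnone => hv (by rw [← hnone, φ.apply_symm_apply])
    rw [← φ.apply_symm_apply v, φ.nbrDeg_apply, hx, nbrDeg_some]
end

section
/- Let a, b, α, β be non-negative integers such that |a − b| = 1, αa + βb is even, and 3a + 3b < α + β − 1. Then there exists a triangle-free graph on α + β vertices having exactly α vertices of degree a and exactly β vertices of degree b. -/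
/-!
One of the two degrees is odd, and by the parity hypothesis the number of vertices that should
get it is even, say `2t`; write it as `2e - 1` or `2e + 1`. On `ZMod n` the circulant graph with
jumps `±1, ±3, …, ±(2e - 1)` is `2e`-regular. Toggling `t` disjoint pairs `u, u + s` of a fixed
odd length `s` moves the degree of their `2t` endpoints to `2e - 1` if `s = 1` (the pairs are
edges, which get removed) and to `2e + 1` if `s > 2e - 1` (they get added).

Every edge of the result joins `u` to `u + δ` for an odd integer `δ` with `|δ| ≤ 2e - 1`, or
`|δ| = s` on the `t` pairs. A triangle contains at most one of the pairs, and the `δ`s of its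
three edges sum to `0` in `ZMod n`; if `2(2e - 1) + s < n` they also sum to `0` in `ℤ`, which
three odd integers cannot do.
-/

open Finset

open scoped symmDiff

lemma ZMod.intCast_eq_zero_iff_of_abs_lt {n : ℕ} {a : ℤ} (ha : |a| < n) :
    (a : ZMod n) = 0 ↔ a = 0 := by
  refine ⟨fun h => Int.eq_zero_of_abs_lt_dvd ((ZMod.intCast_zmod_eq_zero_iff_dvd a n).mp h) ha, ?_⟩
  rintro rfl
  exact Int.cast_zero

lemma ZMod.natCast_injOn_Iio (n : ℕ) : Set.InjOn (Nat.cast : ℕ → ZMod n) (Set.Iio n) :=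
  fun a ha b hb h => by
    rwa [ZMod.natCast_eq_natCast_iff', Nat.mod_eq_of_lt ha, Nat.mod_eq_of_lt hb] at h

lemma card_subtype_eq_of_forall_eq_ite {W : Type*} [Fintype W] [DecidableEq W] {f : W → ℕ}
    {M : Finset W} {X Y : ℕ} (hXY : X ≠ Y) (hf : ∀ w, f w = if w ∈ M then X else Y) (d : ℕ) :
    Nat.card {w // f w = d} = if d = X then #M else if d = Y then Fintype.card W - #M else 0 := by
  rw [Nat.card_eq_fintype_card, Fintype.card_subtype, ← card_compl]
  split_ifs with hX hY
  all_goals first | rw [card_eq_zero] | congr 1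
  all_goals
    ext w
    by_cases hw : w ∈ M <;> simp [hf, hw] <;> omega

namespace SimpleGraph

section Degree

variable {V : Type*}

lemma nbrDeg_eq_ncard (G : SimpleGraph V) (v : V) : nbrDeg G v = (G.neighborSet v).ncard :=
  Nat.card_coe_set_eq _

lemma nbrDeg_comap {W : Type*} (f : V ≃ W) (G : SimpleGraph W) (v : V) :
    nbrDeg (G.comap f) v = nbrDeg G (f v) :=
  Nat.card_congr (f.subtypeEquiv fun _ => Iff.rfl)

variable [Finite V] {G H : SimpleGraph V}

lemma nbrDeg_symmDiff_of_le (h : H ≤ G) (v : V) :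
    nbrDeg (G ∆ H) v = nbrDeg G v - nbrDeg H v := by
  rw [symmDiff_of_ge h, nbrDeg_eq_ncard, neighborSet_sdiff,
    Set.ncard_sdiff (neighborSet_mono h v), nbrDeg_eq_ncard, nbrDeg_eq_ncard]

lemma nbrDeg_symmDiff_of_disjoint (h : Disjoint G H) (v : V) :
    nbrDeg (G ∆ H) v = nbrDeg G v + nbrDeg H v := by
  rw [h.symmDiff_eq_sup, nbrDeg_eq_ncard, neighborSet_sup, Set.ncard_union_eq, nbrDeg_eq_ncard,
    nbrDeg_eq_ncard]
  exact Set.disjoint_left.mpr fun w hG hH => disjoint_left.mp h v w hG hH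

end Degree

section Shift

variable {Γ : Type*} [AddCommGroup Γ]

lemma neighborSet_circulantGraph {S : Set Γ} (hS : ∀ x ∈ S, -x ∈ S) (h0 : (0 : Γ) ∉ S)
    (v : Γ) : (circulantGraph S).neighborSet v = (v + ·) '' S := by
  ext w
  simp only [mem_neighborSet, circulantGraph_adj, Set.mem_image]
  constructor
  · rintro ⟨-, h | h⟩
    · exact ⟨w - v, by simpa using hS _ h, add_sub_cancel v w⟩
    · exact ⟨w - v, h, add_sub_cancel v w⟩
  · rintro ⟨x, hx, rfl⟩
    refine ⟨fun h => h0 ?_, Or.inr (by simpa using hx)⟩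
    rwa [show x = 0 by simpa using h] at hx

def shiftMatching (A : Set Γ) (s : Γ) : SimpleGraph Γ :=
  fromRel fun u v => u ∈ A ∧ v = u + s

variable {A : Set Γ} {s : Γ}

lemma shiftMatching_adj_iff (hA : ∀ a ∈ A, a + s ∉ A) {u v : Γ} :
    (shiftMatching A s).Adj u v ↔ u ∈ A ∧ v = u + s ∨ v ∈ A ∧ u = v + s := by
  refine ⟨fun h => h.2, fun h => ⟨?_, h⟩⟩
  rintro rfl
  obtain ⟨hu, h⟩ | ⟨hu, h⟩ := h <;> exact hA u hu (h ▸ hu)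

lemma neighborSet_shiftMatching_of_mem (hA : ∀ a ∈ A, a + s ∉ A) {v : Γ} (hv : v ∈ A) :
    (shiftMatching A s).neighborSet v = {v + s} := by
  ext w
  simp only [mem_neighborSet, shiftMatching_adj_iff hA, Set.mem_singleton_iff]
  refine ⟨?_, fun h => Or.inl ⟨hv, h⟩⟩
  rintro (⟨-, h⟩ | ⟨hw, rfl⟩)
  · exact h
  · exact absurd hv (hA w hw)

lemma neighborSet_shiftMatching_of_sub_mem (hA : ∀ a ∈ A, a + s ∉ A) {v : Γ} (hv : v - s ∈ A) :
    (shiftMatching A s).neighborSet v = {v - s} := by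
  ext w
  simp only [mem_neighborSet, shiftMatching_adj_iff hA, Set.mem_singleton_iff]
  refine ⟨?_, fun h => Or.inr ⟨h ▸ hv, by rw [h, sub_add_cancel]⟩⟩
  rintro (⟨hv', -⟩ | ⟨-, rfl⟩)
  · exact absurd hv' (by simpa using hA _ hv)
  · exact (add_sub_cancel_right w s).symm

lemma neighborSet_shiftMatching_of_notMem {v : Γ} (hv : v ∉ A) (hv' : v - s ∉ A) :
    (shiftMatching A s).neighborSet v = ∅ := by
  ext w
  simp only [mem_neighborSet, shiftMatching, fromRel_adj, Set.mem_empty_iff_false, iff_false]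
  rintro ⟨-, ⟨hv'', -⟩ | ⟨hw, rfl⟩⟩
  · exact hv hv''
  · exact hv' (by rwa [add_sub_cancel_right])

lemma shiftMatching_adj_unique (hA : ∀ a ∈ A, a + s ∉ A) {u v w : Γ}
    (hv : (shiftMatching A s).Adj u v) (hw : (shiftMatching A s).Adj u w) : v = w := by
  have hv' : v ∈ (shiftMatching A s).neighborSet u := hv
  have hw' : w ∈ (shiftMatching A s).neighborSet u := hw
  by_cases hu : u ∈ A
  · rw [neighborSet_shiftMatching_of_mem hA hu] at hv' hw'
    exact hv'.trans hw'.symm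
  by_cases hu' : u - s ∈ A
  · rw [neighborSet_shiftMatching_of_sub_mem hA hu'] at hv' hw'
    exact hv'.trans hw'.symm
  · rw [neighborSet_shiftMatching_of_notMem hu hu'] at hv'
    exact hv'.elim

lemma shiftMatching_le_circulantGraph {S : Set Γ} (hs : s ∈ S) :
    shiftMatching A s ≤ circulantGraph S := by
  rintro u v ⟨huv, ⟨-, rfl⟩ | ⟨-, rfl⟩⟩
  · exact ⟨huv, Or.inr (by simpa using hs)⟩
  · exact ⟨huv, Or.inl (by simpa using hs)⟩

lemma disjoint_shiftMatching_circulantGraph {S : Set Γ} (hs : s ∉ S) (hs' : -s ∉ S) :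
    Disjoint (shiftMatching A s) (circulantGraph S) := by
  refine disjoint_left.mpr ?_
  rintro u v ⟨-, ⟨-, rfl⟩ | ⟨-, rfl⟩⟩ ⟨-, h | h⟩ <;> simp_all

end Shift

section ShiftFinset

variable {Γ : Type*} [AddCommGroup Γ] [DecidableEq Γ] {A : Finset Γ} {s : Γ}

lemma nbrDeg_shiftMatching [Finite Γ] (hA : ∀ a ∈ A, a + s ∉ A) (v : Γ) :
    nbrDeg (shiftMatching A s) v = if v ∈ A ∪ A.image (· + s) then 1 else 0 := by
  have hmem : v ∈ A.image (· + s) ↔ v - s ∈ A := by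
    rw [mem_image]
    exact ⟨by rintro ⟨a, ha, rfl⟩; simpa using ha, fun h => ⟨v - s, h, sub_add_cancel v s⟩⟩
  have hA' : ∀ a ∈ (A : Set Γ), a + s ∉ (A : Set Γ) := hA
  rw [nbrDeg_eq_ncard]
  simp only [mem_union, hmem]
  by_cases hv : v ∈ A
  · rw [neighborSet_shiftMatching_of_mem hA' hv, Set.ncard_singleton, if_pos (Or.inl hv)]
  by_cases hv' : v - s ∈ A
  · rw [neighborSet_shiftMatching_of_sub_mem hA' hv', Set.ncard_singleton, if_pos (Or.inr hv')]
  · rw [neighborSet_shiftMatching_of_notMem hv hv', Set.ncard_empty, if_neg (by tauto)]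

lemma card_union_image_add (hA : ∀ a ∈ A, a + s ∉ A) : #(A ∪ A.image (· + s)) = 2 * #A := by
  rw [card_union_of_disjoint, card_image_of_injective _ (add_left_injective s), two_mul]
  exact Finset.disjoint_left.mpr fun a ha ha' => by
    obtain ⟨b, hb, rfl⟩ := mem_image.mp ha'
    exact hA b hb ha

end ShiftFinset

section OddLengths

variable {n : ℕ}

def OddEdgeLengthLE (G : SimpleGraph (ZMod n)) (ℓ : ℕ) : Prop :=
  ∀ u v, G.Adj u v → ∃ δ : ℤ, Odd δ ∧ |δ| ≤ ℓ ∧ (δ : ZMod n) = v - u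

theorem cliqueFree_three_sup_of_oddEdgeLengthLE {G M : SimpleGraph (ZMod n)} {ℓ m : ℕ}
    (hG : OddEdgeLengthLE G ℓ) (hM : OddEdgeLengthLE M m)
    (hMatch : ∀ u v w, M.Adj u v → M.Adj u w → v = w) (h3 : 3 * ℓ < n) (h2 : 2 * ℓ + m < n) :
    (G ⊔ M).CliqueFree 3 := by
  have edge : ∀ u v, (G ⊔ M).Adj u v →
      ∃ δ : ℤ, Odd δ ∧ (δ : ZMod n) = v - u ∧ (|δ| ≤ ℓ ∨ M.Adj u v ∧ |δ| ≤ m) := by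
    rintro u v (h | h)
    · obtain ⟨δ, hδ, hl, he⟩ := hG u v h
      exact ⟨δ, hδ, he, Or.inl hl⟩
    · obtain ⟨δ, hδ, hl, he⟩ := hM u v h
      exact ⟨δ, hδ, he, Or.inr ⟨h, hl⟩⟩
  intro S hS
  obtain ⟨x, y, z, hxy, hxz, hyz, -⟩ := is3Clique_iff.mp hS
  obtain ⟨δ₁, o₁, e₁, b₁⟩ := edge x y hxy
  obtain ⟨δ₂, o₂, e₂, b₂⟩ := edge y z hyz
  obtain ⟨δ₃, o₃, e₃, b₃⟩ := edge z x hxz.symm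
  have h3' : (3 * ℓ : ℤ) < n := by exact_mod_cast h3
  have h2' : (2 * ℓ + m : ℤ) < n := by exact_mod_cast h2
  have hsum : |δ₁ + δ₂ + δ₃| < n := by
    have := abs_add_three δ₁ δ₂ δ₃
    rcases b₁ with b₁ | ⟨m₁, b₁⟩ <;> rcases b₂ with b₂ | ⟨m₂, b₂⟩ <;>
      rcases b₃ with b₃ | ⟨m₃, b₃⟩
    any_goals linarith
    · exact absurd (hMatch z y x m₂.symm m₃) hxy.ne.symm
    · exact absurd (hMatch x y z m₁ m₃.symm) hyz.ne
    all_goals exact absurd (hMatch y x z m₁.symm m₂) hxz.ne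
  have hzero : ((δ₁ + δ₂ + δ₃ : ℤ) : ZMod n) = 0 := by
    push_cast
    rw [e₁, e₂, e₃]
    ring
  rw [ZMod.intCast_eq_zero_iff_of_abs_lt hsum] at hzero
  exact Int.not_even_iff_odd.mpr ((o₁.add_odd o₂).add_odd o₃) (hzero ▸ Even.zero)

lemma oddEdgeLengthLE_shiftMatching {A : Set (ZMod n)} {s : ℕ} (hs : Odd s) :
    OddEdgeLengthLE (shiftMatching A s) s := by
  rintro u v ⟨-, ⟨-, rfl⟩ | ⟨-, rfl⟩⟩
  · exact ⟨s, by exact_mod_cast hs, by simp, by simp⟩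
  · exact ⟨-s, (by exact_mod_cast hs : Odd (s : ℤ)).neg, by simp, by simp⟩

/-- The residues of `±1, ±3, …, ±(2e - 1)`. -/
def oddJumps (n e : ℕ) : Finset (ZMod n) :=
  (range (2 * e)).image fun k : ℕ => ((2 * k + 1 - 2 * e : ℤ) : ZMod n)

lemma neg_mem_oddJumps {e : ℕ} {x : ZMod n} (hx : x ∈ oddJumps n e) : -x ∈ oddJumps n e := by
  obtain ⟨k, hk, rfl⟩ := mem_image.mp hx
  rw [mem_range] at hk
  refine mem_image.mpr ⟨2 * e - 1 - k, mem_range.mpr (by omega), ?_⟩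
  rw [← Int.cast_neg]
  congr 1
  omega

lemma natCast_mem_oddJumps {e s : ℕ} (hs : Odd s) (hse : s < 2 * e) :
    (s : ZMod n) ∈ oddJumps n e := by
  obtain ⟨j, rfl⟩ := hs
  refine mem_image.mpr ⟨e + j, mem_range.mpr (by omega), ?_⟩
  push_cast
  ring

lemma natCast_notMem_oddJumps {e s : ℕ} (hes : 2 * e ≤ s) (hsn : s + 2 * e ≤ n) :
    (s : ZMod n) ∉ oddJumps n e := by
  intro h
  obtain ⟨k, hk, he⟩ := mem_image.mp h
  rw [mem_range] at hk
  have hzero : ((s - (2 * k + 1 - 2 * e) : ℤ) : ZMod n) = 0 := by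
    rw [Int.cast_sub, he, Int.cast_natCast, sub_self]
  rw [ZMod.intCast_eq_zero_iff_of_abs_lt (abs_lt.mpr ⟨by omega, by omega⟩)] at hzero
  omega

lemma zero_notMem_oddJumps {e : ℕ} (hn : 4 * e ≤ n + 1) : (0 : ZMod n) ∉ oddJumps n e := by
  intro h
  obtain ⟨k, hk, he⟩ := mem_image.mp h
  rw [mem_range] at hk
  rw [ZMod.intCast_eq_zero_iff_of_abs_lt (abs_lt.mpr ⟨by omega, by omega⟩)] at he
  omega

lemma card_oddJumps {e : ℕ} (hn : 4 * e ≤ n + 1) : #(oddJumps n e) = 2 * e := by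
  rw [oddJumps, card_image_of_injOn, card_range]
  intro k hk j hj h
  simp only [coe_range, Set.mem_Iio] at hk hj
  have hzero : (((2 * k + 1 - 2 * e) - (2 * j + 1 - 2 * e) : ℤ) : ZMod n) = 0 := by
    push_cast at h ⊢
    rw [h, sub_self]
  rw [ZMod.intCast_eq_zero_iff_of_abs_lt (abs_lt.mpr ⟨by omega, by omega⟩)] at hzero
  omega

lemma nbrDeg_circulantGraph_oddJumps {e : ℕ} (hn : 4 * e ≤ n + 1) (v : ZMod n) :
    nbrDeg (circulantGraph (oddJumps n e : Set (ZMod n))) v = 2 * e := by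
  rw [nbrDeg_eq_ncard, neighborSet_circulantGraph (fun _ => neg_mem_oddJumps)
    (zero_notMem_oddJumps hn), Set.ncard_image_of_injective _ (add_right_injective v),
    Set.ncard_coe_finset, card_oddJumps hn]

lemma oddEdgeLengthLE_circulantGraph_oddJumps (e : ℕ) :
    OddEdgeLengthLE (circulantGraph (oddJumps n e : Set (ZMod n))) (2 * e - 1) := by
  have key : ∀ x ∈ oddJumps n e, ∃ δ : ℤ, Odd δ ∧ |δ| ≤ (2 * e - 1 : ℕ) ∧ (δ : ZMod n) = x := by
    intro x hx
    obtain ⟨k, hk, rfl⟩ := mem_image.mp hx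
    rw [mem_range] at hk
    exact ⟨_, ⟨k - e, by ring⟩, abs_le.mpr ⟨by omega, by omega⟩, rfl⟩
  rintro u v ⟨-, h | h⟩
  · obtain ⟨δ, hδ, hl, he⟩ := key _ h
    exact ⟨-δ, hδ.neg, by rwa [abs_neg], by rw [Int.cast_neg, he, neg_sub]⟩
  · exact key _ h

def matchedCirculant (n e s : ℕ) (P : Finset ℕ) : SimpleGraph (ZMod n) :=
  circulantGraph (oddJumps n e : Set (ZMod n)) ∆ shiftMatching ↑(P.image (Nat.cast : ℕ → ZMod n)) s

variable {e s : ℕ} {P : Finset ℕ}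

lemma natCast_add_notMem_image (hP : ∀ p ∈ P, p + s < n) (hPs : ∀ p ∈ P, ∀ q ∈ P, p + s ≠ q) :
    ∀ a ∈ P.image (Nat.cast : ℕ → ZMod n), a + s ∉ P.image (Nat.cast : ℕ → ZMod n) := by
  simp only [mem_image]
  rintro _ ⟨p, hp, rfl⟩ ⟨q, hq, h⟩
  refine hPs p hp q hq (ZMod.natCast_injOn_Iio n (hP p hp) ?_ (by push_cast; exact h.symm))
  exact lt_of_le_of_lt (Nat.le_add_right q s) (hP q hq)

lemma card_image_natCast (hP : ∀ p ∈ P, p + s < n) : #(P.image (Nat.cast : ℕ → ZMod n)) = #P :=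
  card_image_of_injOn fun p hp q hq =>
    ZMod.natCast_injOn_Iio n (lt_of_le_of_lt (Nat.le_add_right p s) (hP p hp))
      (lt_of_le_of_lt (Nat.le_add_right q s) (hP q hq))

lemma card_matchedSet (hP : ∀ p ∈ P, p + s < n) (hPs : ∀ p ∈ P, ∀ q ∈ P, p + s ≠ q) :
    #(P.image Nat.cast ∪ (P.image Nat.cast).image (· + (s : ZMod n))) = 2 * #P := by
  rw [card_union_image_add (natCast_add_notMem_image hP hPs), card_image_natCast hP]

theorem cliqueFree_three_matchedCirculant (hs : Odd s) (hP : ∀ p ∈ P, p + s < n)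
    (hPs : ∀ p ∈ P, ∀ q ∈ P, p + s ≠ q) (h3 : 3 * (2 * e - 1) < n) (h2 : 2 * (2 * e - 1) + s < n) :
    (matchedCirculant n e s P).CliqueFree 3 :=
  (cliqueFree_three_sup_of_oddEdgeLengthLE (oddEdgeLengthLE_circulantGraph_oddJumps e)
    (oddEdgeLengthLE_shiftMatching hs)
    (fun _ _ _ => shiftMatching_adj_unique (by exact_mod_cast natCast_add_notMem_image hP hPs))
    h3 h2).anti symmDiff_le_sup

variable [NeZero n]

lemma nbrDeg_matchedCirculant_of_lt (hs : Odd s) (hse : s < 2 * e) (hn : 4 * e ≤ n + 1)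
    (hP : ∀ p ∈ P, p + s < n) (hPs : ∀ p ∈ P, ∀ q ∈ P, p + s ≠ q) (v : ZMod n) :
    nbrDeg (matchedCirculant n e s P) v =
      if v ∈ P.image Nat.cast ∪ (P.image Nat.cast).image (· + (s : ZMod n))
      then 2 * e - 1 else 2 * e := by
  rw [matchedCirculant, nbrDeg_symmDiff_of_le (shiftMatching_le_circulantGraph
    (natCast_mem_oddJumps hs hse)), nbrDeg_circulantGraph_oddJumps hn,
    nbrDeg_shiftMatching (natCast_add_notMem_image hP hPs)]
  split_ifs <;> rfl

lemma nbrDeg_matchedCirculant_of_le (hes : 2 * e ≤ s) (hsn : s + 2 * e ≤ n)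
    (hn : 4 * e ≤ n + 1) (hP : ∀ p ∈ P, p + s < n) (hPs : ∀ p ∈ P, ∀ q ∈ P, p + s ≠ q)
    (v : ZMod n) :
    nbrDeg (matchedCirculant n e s P) v =
      if v ∈ P.image Nat.cast ∪ (P.image Nat.cast).image (· + (s : ZMod n))
      then 2 * e + 1 else 2 * e := by
  have hs : (s : ZMod n) ∉ oddJumps n e := natCast_notMem_oddJumps hes hsn
  rw [matchedCirculant, nbrDeg_symmDiff_of_disjoint (disjoint_shiftMatching_circulantGraph hs
    fun h => hs (neg_neg (s : ZMod n) ▸ neg_mem_oddJumps h)).symm,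
    nbrDeg_circulantGraph_oddJumps hn, nbrDeg_shiftMatching (natCast_add_notMem_image hP hPs)]
  split_ifs <;> rfl

theorem exists_cliqueFree_three_nbrDeg_pred (e t : ℕ) (he : 1 ≤ e) (ht : 2 * t ≤ n)
    (hn : 3 * (2 * e - 1) < n) :
    ∃ H : SimpleGraph (ZMod n), H.CliqueFree 3 ∧ ∃ M : Finset (ZMod n), #M = 2 * t ∧
      ∀ v, nbrDeg H v = if v ∈ M then 2 * e - 1 else 2 * e := by
  have hP : ∀ p ∈ (range t).image (2 * ·), p + 1 < n := by
    simp only [mem_image, mem_range]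
    omega
  have hPs : ∀ p ∈ (range t).image (2 * ·), ∀ q ∈ (range t).image (2 * ·), p + 1 ≠ q := by
    simp only [mem_image]
    omega
  refine ⟨matchedCirculant n e 1 ((range t).image (2 * ·)),
    cliqueFree_three_matchedCirculant odd_one hP hPs hn (by omega), _,
    ?_, nbrDeg_matchedCirculant_of_lt odd_one (by omega) (by omega) hP hPs⟩
  rw [card_matchedSet hP hPs, card_image_of_injective _ (fun _ _ h => by omega), card_range]

theorem exists_cliqueFree_three_nbrDeg_succ (e t : ℕ) (ht : 2 * t < n) (hn : 12 * e + 5 ≤ n) :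
    ∃ H : SimpleGraph (ZMod n), H.CliqueFree 3 ∧ ∃ M : Finset (ZMod n), #M = 2 * t ∧
      ∀ v, nbrDeg H v = if v ∈ M then 2 * e + 1 else 2 * e := by
  -- `s` is odd and at least `2e + 1` and `t`; `s + 2(2e - 1) < n` as `2t < n` and `12e + 5 ≤ n`
  set s := 2 * max e (t / 2) + 1
  have hP : ∀ p ∈ range t, p + s < n := by
    simp only [mem_range]
    omega
  have hPs : ∀ p ∈ range t, ∀ q ∈ range t, p + s ≠ q := by
    simp only [mem_range]
    omega
  refine ⟨matchedCirculant n e s (range t),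
    cliqueFree_three_matchedCirculant ⟨_, rfl⟩ hP hPs (by omega) (by omega), _,
    ?_, nbrDeg_matchedCirculant_of_le (by omega) (by omega) (by omega) hP hPs⟩
  rw [card_matchedSet hP hPs, card_range]

end OddLengths

end SimpleGraph

open SimpleGraph in
theorem exists_cliqueFree_three_zmod_nbrDeg (x γ δ : ℕ) (heven : Even (γ * x + δ * (x + 1)))
    (hsize : 6 * x + 4 < γ + δ) :
    ∃ H : SimpleGraph (ZMod (γ + δ)), H.CliqueFree 3 ∧
      Nat.card {v // nbrDeg H v = x} = γ ∧ Nat.card {v // nbrDeg H v = x + 1} = δ := by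
  have : NeZero (γ + δ) := ⟨by omega⟩
  rcases Nat.even_or_odd x with ⟨e, rfl⟩ | ⟨e, rfl⟩
  · obtain ⟨t, rfl⟩ : Even δ := by simpa [Nat.even_add, Nat.even_mul, parity_simps] using heven
    rcases Nat.eq_zero_or_pos γ with rfl | hγ
    · obtain ⟨H, hH, M, hM, hdeg⟩ :=
        exists_cliqueFree_three_nbrDeg_pred (n := 0 + (t + t)) (e + 1) t (by omega) (by omega)
          (by omega)
      refine ⟨H, hH, ?_, ?_⟩ <;>
        rw [card_subtype_eq_of_forall_eq_ite (by omega) hdeg, ZMod.card] <;> split_ifs <;> omega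
    · obtain ⟨H, hH, M, hM, hdeg⟩ :=
        exists_cliqueFree_three_nbrDeg_succ (n := γ + (t + t)) e t (by omega) (by omega)
      refine ⟨H, hH, ?_, ?_⟩ <;>
        rw [card_subtype_eq_of_forall_eq_ite (by omega) hdeg, ZMod.card] <;> split_ifs <;> omega
  · obtain ⟨t, rfl⟩ : Even γ := by simpa [Nat.even_add, Nat.even_mul, parity_simps] using heven
    obtain ⟨H, hH, M, hM, hdeg⟩ :=
      exists_cliqueFree_three_nbrDeg_pred (n := t + t + δ) (e + 1) t (by omega) (by omega)
        (by omega)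
    refine ⟨H, hH, ?_, ?_⟩ <;>
      rw [card_subtype_eq_of_forall_eq_ite (by omega) hdeg, ZMod.card] <;> split_ifs <;> omega

open SimpleGraph in
theorem exists_cliqueFree_three_nbrDeg {V : Type*} [Fintype V] (x γ δ : ℕ)
    (hV : Fintype.card V = γ + δ) (heven : Even (γ * x + δ * (x + 1)))
    (hsize : 6 * x + 4 < γ + δ) :
    ∃ G : SimpleGraph V, G.CliqueFree 3 ∧
      Nat.card {v // nbrDeg G v = x} = γ ∧ Nat.card {v // nbrDeg G v = x + 1} = δ := by
  have : NeZero (γ + δ) := ⟨by omega⟩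
  obtain ⟨H, hH, hx, hx'⟩ := exists_cliqueFree_three_zmod_nbrDeg x γ δ heven hsize
  let f : V ≃ ZMod (γ + δ) := Fintype.equivOfCardEq (hV.trans (ZMod.card _).symm)
  have hcard : ∀ d, Nat.card {v // nbrDeg (H.comap f) v = d} = Nat.card {w // nbrDeg H w = d} :=
    fun d => Nat.card_congr (f.subtypeEquiv fun v => by rw [nbrDeg_comap])
  exact ⟨H.comap f, hH.comap (Iso.comap f H).toEmbedding.isContained,
    (hcard x).trans hx, (hcard (x + 1)).trans hx'⟩

theorem exists_trianglefree_two_degrees (a b α β : ℕ)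
    (hab : a = b + 1 ∨ b = a + 1)
    (heven : Even (α * a + β * b))
    (hsize : 3 * a + 3 * b + 1 < α + β) :
    ∃ G : SimpleGraph (Fin (α + β)),
      G.CliqueFree 3 ∧
      Nat.card {v : Fin (α + β) // nbrDeg G v = a} = α ∧
      Nat.card {v : Fin (α + β) // nbrDeg G v = b} = β := by
  rcases hab with rfl | rfl
  · obtain ⟨G, hG, hb, ha⟩ := exists_cliqueFree_three_nbrDeg b β α
      (by rw [Fintype.card_fin, add_comm]) (by rwa [add_comm]) (by omega)
    exact ⟨G, hG, ha, hb⟩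
  · exact exists_cliqueFree_three_nbrDeg a α β (Fintype.card_fin _) heven (by omega)
end

section
/- Let G be a graph with vertex set partitioned into V₁ and V₂ such that all edges between V₁ and V₂ are present. If e₁ and e₂ are two edges inside V₁ sharing exactly one vertex, then the number of bowtie subgraphs of G containing both e₁ and e₂ is at least |V₂|·(|V₂|−1). -/
/-! Every ordered pair of distinct vertices `u₁ u₂ ∉ V₁` yields the bowtie with triangles
`v w₁ u₁` and `v w₂ u₂`, because all edges across the partition are present. Such a bowtie is
listed by eight ordered tuples (orient each outer edge, order the two triangles), and tuples
coming from different pairs differ because `w₁, w₂ ∈ V₁` while `u₁, u₂ ∉ V₁`. Hence there are at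
least `8 |V₂| (|V₂| - 1)` tuples, that is, `|V₂| (|V₂| - 1)` bowties. -/

open Finset

section Bowtie

variable {V : Type*} {G : SimpleGraph V} {c a b d e : V}

abbrev IsBowtieTuple (G : SimpleGraph V) (t : V × V × V × V × V) : Prop :=
  IsBowtie G t.1 t.2.1 t.2.2.1 t.2.2.2.1 t.2.2.2.2

abbrev btEdgesTuple (t : V × V × V × V × V) : Set (Sym2 V) :=
  btEdges t.1 t.2.1 t.2.2.1 t.2.2.2.1 t.2.2.2.2

/-- The eight ordered tuples describing one bowtie: `p` and `q` orient the two triangles'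
outer edges, `r` chooses which triangle is listed first. -/
def bowtieTuple (c a b d e : V) : Bool × Bool × Bool → V × V × V × V × V
  | (p, q, r) =>
    let P := if p then (a, b) else (b, a)
    let Q := if q then (d, e) else (e, d)
    if r then (c, P.1, P.2, Q.1, Q.2) else (c, Q.1, Q.2, P.1, P.2)

theorem IsBowtie.swap_left (h : IsBowtie G c a b d e) : IsBowtie G c b a d e := by
  obtain ⟨hca, hcb, hab, hcd, hce, hde, had, hae, hbd, hbe⟩ := h
  exact ⟨hcb, hca, hab.symm, hcd, hce, hde, hbd, hbe, had, hae⟩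

theorem IsBowtie.swap_right (h : IsBowtie G c a b d e) : IsBowtie G c a b e d := by
  obtain ⟨hca, hcb, hab, hcd, hce, hde, had, hae, hbd, hbe⟩ := h
  exact ⟨hca, hcb, hab, hce, hcd, hde.symm, hae, had, hbe, hbd⟩

theorem IsBowtie.swap_triangles (h : IsBowtie G c a b d e) : IsBowtie G c d e a b := by
  obtain ⟨hca, hcb, hab, hcd, hce, hde, had, hae, hbd, hbe⟩ := h
  exact ⟨hcd, hce, hde, hca, hcb, hab, had.symm, hbd.symm, hae.symm, hbe.symm⟩

theorem IsBowtie.bowtieTuple (h : IsBowtie G c a b d e) (s : Bool × Bool × Bool) :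
    IsBowtieTuple G (bowtieTuple c a b d e s) := by
  obtain ⟨_ | _, _ | _, _ | _⟩ := s
  all_goals first
    | exact h | exact h.swap_left | exact h.swap_right | exact h.swap_left.swap_right
    | exact h.swap_triangles | exact h.swap_left.swap_triangles
    | exact h.swap_right.swap_triangles | exact h.swap_left.swap_right.swap_triangles

theorem btEdgesTuple_bowtieTuple (c a b d e : V) (s : Bool × Bool × Bool) :
    btEdgesTuple (bowtieTuple c a b d e s) = btEdges c a b d e := by
  obtain ⟨_ | _, _ | _, _ | _⟩ := s <;> ext <;> simp [bowtieTuple, btEdges, Sym2.eq_swap] <;> tauto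

theorem bowtieTuple_injOn {w₁ w₂ : V} (hw : w₁ ≠ w₂) :
    Set.InjOn (fun x : (V × V) × (Bool × Bool × Bool) => bowtieTuple c w₁ x.1.1 w₂ x.1.2 x.2)
      {x | x.1.1 ≠ w₁ ∧ x.1.1 ≠ w₂ ∧ x.1.2 ≠ w₁ ∧ x.1.2 ≠ w₂} := by
  rintro ⟨⟨x₁, y₁⟩, p, q, r⟩ ⟨hx₁, hx₁', hy₁, hy₁'⟩ ⟨⟨x₂, y₂⟩, p', q', r'⟩ ⟨hx₂, hx₂', hy₂, hy₂'⟩ h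
  cases p <;> cases q <;> cases r <;> cases p' <;> cases q' <;> cases r' <;>
    simp_all [bowtieTuple]

theorem isBowtie_of_forall_adj_compl {A : Set V}
    (hcross : ∀ u v, u ∈ A → v ∉ A → G.Adj u v) {x y : V} (hc : c ∈ A) (ha : a ∈ A)
    (hd : d ∈ A) (hca : G.Adj c a) (hcd : G.Adj c d) (had : a ≠ d) (hx : x ∉ A) (hy : y ∉ A)
    (hxy : x ≠ y) : IsBowtie G c a x d y :=
  ⟨hca, hcross c x hc hx, hcross a x ha hx, hcd, hcross c y hc hy, hcross d y hd hy, had,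
    fun h => hy (h ▸ ha), fun h => hx (h ▸ hd), hxy⟩

end Bowtie

theorem bowties_through_adjacent_pair {V : Type*} [Fintype V] [DecidableEq V]
    (G : SimpleGraph V) (V₁ : Finset V)
    (hcross : ∀ u v : V, u ∈ V₁ → v ∉ V₁ → G.Adj u v)
    (v w₁ w₂ : V) (hv : v ∈ V₁) (hw₁ : w₁ ∈ V₁) (hw₂ : w₂ ∈ V₁)
    (h1 : G.Adj v w₁) (h2 : G.Adj v w₂) (hne : w₁ ≠ w₂) :
    V₁ᶜ.card * (V₁ᶜ.card - 1) ≤ bowtieCountThru2 G s(v, w₁) s(v, w₂) := by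
  set X : Finset ((V × V) × (Bool × Bool × Bool)) := V₁ᶜ.offDiag ×ˢ univ
  set T : Set (V × V × V × V × V) :=
    {t | IsBowtieTuple G t ∧ s(v, w₁) ∈ btEdgesTuple t ∧ s(v, w₂) ∈ btEdgesTuple t}
  set f := fun x : (V × V) × (Bool × Bool × Bool) => bowtieTuple v w₁ x.1.1 w₂ x.1.2 x.2
  have hX : ∀ x ∈ X, x.1.1 ∉ V₁ ∧ x.1.2 ∉ V₁ ∧ x.1.1 ≠ x.1.2 := by
    simp [X]
  have hmaps : ∀ x ∈ X, f x ∈ T := by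
    intro x hx
    obtain ⟨hx₁, hx₂, hx₁₂⟩ := hX x hx
    refine ⟨(isBowtie_of_forall_adj_compl hcross hv hw₁ hw₂ h1 h2 hne hx₁ hx₂ hx₁₂).bowtieTuple _,
      ?_, ?_⟩ <;> simp [f, btEdgesTuple_bowtieTuple, btEdges]
  have hinj : Set.InjOn f X :=
    (bowtieTuple_injOn hne).mono fun x hx => by
      obtain ⟨hx₁, hx₂, -⟩ := hX x hx
      exact ⟨fun h => hx₁ (h ▸ hw₁), fun h => hx₁ (h ▸ hw₂), fun h => hx₂ (h ▸ hw₁),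
        fun h => hx₂ (h ▸ hw₂)⟩
  calc #V₁ᶜ * (#V₁ᶜ - 1) = X.card / 8 := by
        simp [X, offDiag_card, Nat.mul_sub_one]
    _ = (X : Set _).ncard / 8 := by rw [Set.ncard_coe_finset]
    _ ≤ T.ncard / 8 := Nat.div_le_div_right (Set.ncard_le_ncard_of_injOn f hmaps hinj)
    _ = bowtieCountThru2 G s(v, w₁) s(v, w₂) := rfl
end

section
/- Let G be a graph on n vertices with vertex set partitioned into V₁ and V₂ such that all edges between V₁ and V₂ are present. If e₁ is an edge inside V₁ and e₂ is an edge inside V₂, then the number of bowtie subgraphs of G containing both e₁ and e₂ is at least 2(n−4). -/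
open Finset

/-!
If `x ∉ V₁` is none of `w₁, w₂, u₁, u₂`, then for either endpoint `w` of `w₁w₂` (with `w'` the
other one) the triangles `w w' x` and `w u₁ u₂` form a bowtie through both edges, because all
edges between `V₁` and its complement are present; symmetrically for `x ∈ V₁` with centres
`u₁, u₂`. This gives `2 (n - 4)` bowties, and each of them is represented by `8` ordered tuples,
obtained by swapping the two outer vertices of either triangle and swapping the triangles.
-/

theorem sum_card_fst_eq_le_card {α β : Type*} [Fintype α] [Fintype β] (P : α × β → Prop)
    (C : Finset α) :
    ∑ a ∈ C, Nat.card {p : α × β // p.1 = a ∧ P p} ≤ Nat.card {p : α × β // P p} := by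
  classical
  simp only [Nat.card_eq_fintype_card, Fintype.card_subtype]
  calc ∑ a ∈ C, #{p : α × β | p.1 = a ∧ P p}
      = ∑ a ∈ C, #{p ∈ ({p | P p ∧ p.1 ∈ C} : Finset (α × β)) | p.1 = a} := by
        refine sum_congr rfl fun a ha => congrArg card ?_
        ext p
        simp only [mem_filter, mem_univ, true_and]
        constructor
        · rintro ⟨rfl, hp⟩; exact ⟨⟨hp, ha⟩, rfl⟩
        · rintro ⟨⟨hp, -⟩, rfl⟩; exact ⟨rfl, hp⟩
    _ = #{p : α × β | P p ∧ p.1 ∈ C} :=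
        (card_eq_sum_card_fiberwise fun p hp => (mem_filter.1 hp).2.2).symm
    _ ≤ #{p : α × β | P p} := card_le_card (monotone_filter_right _ fun _ _ => And.left)

namespace Bowtie

variable {V : Type*} {G : SimpleGraph V} {c a b d e : V}

theorem btEdges_swap_left : btEdges c b a d e = btEdges c a b d e := by
  ext
  simp only [btEdges, Set.mem_insert_iff, Set.mem_singleton_iff, Sym2.eq_swap (a := b)]
  tauto

theorem btEdges_swap_right : btEdges c a b e d = btEdges c a b d e := by
  ext
  simp only [btEdges, Set.mem_insert_iff, Set.mem_singleton_iff, Sym2.eq_swap (a := e)]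
  tauto

theorem btEdges_swap_triangles : btEdges c d e a b = btEdges c a b d e := by
  ext
  simp only [btEdges, Set.mem_insert_iff, Set.mem_singleton_iff]
  tauto

theorem _root_.IsBowtie.swap_left_s8 (h : IsBowtie G c a b d e) : IsBowtie G c b a d e :=
  let ⟨hca, hcb, hab, hcd, hce, hde, had, hae, hbd, hbe⟩ := h
  ⟨hcb, hca, hab.symm, hcd, hce, hde, hbd, hbe, had, hae⟩

theorem _root_.IsBowtie.swap_right_s8 (h : IsBowtie G c a b d e) : IsBowtie G c a b e d :=
  let ⟨hca, hcb, hab, hcd, hce, hde, had, hae, hbd, hbe⟩ := h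
  ⟨hca, hcb, hab, hce, hcd, hde.symm, hae, had, hbe, hbd⟩

theorem _root_.IsBowtie.swap_triangles_s8 (h : IsBowtie G c a b d e) : IsBowtie G c d e a b :=
  let ⟨hca, hcb, hab, hcd, hce, hde, had, hae, hbd, hbe⟩ := h
  ⟨hcd, hce, hde, hca, hcb, hab, had.symm, hbd.symm, hae.symm, hbe.symm⟩

def IsBowtieThru (G : SimpleGraph V) (f₁ f₂ : Sym2 V) (t : V × V × V × V × V) : Prop :=
  IsBowtie G t.1 t.2.1 t.2.2.1 t.2.2.2.1 t.2.2.2.2 ∧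
    f₁ ∈ btEdges t.1 t.2.1 t.2.2.1 t.2.2.2.1 t.2.2.2.2 ∧
    f₂ ∈ btEdges t.1 t.2.1 t.2.2.1 t.2.2.2.1 t.2.2.2.2

theorem isBowtieThru_comm {f₁ f₂ : Sym2 V} {t : V × V × V × V × V} :
    IsBowtieThru G f₁ f₂ t ↔ IsBowtieThru G f₂ f₁ t :=
  and_congr_right fun _ => and_comm

theorem bowtieCountThru2_eq (f₁ f₂ : Sym2 V) :
    bowtieCountThru2 G f₁ f₂ = Nat.card {t : V × V × V × V × V // IsBowtieThru G f₁ f₂ t} / 8 :=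
  rfl

theorem card_centred_comm {f₁ f₂ : Sym2 V} :
    Nat.card {t : V × V × V × V × V // t.1 = c ∧ IsBowtieThru G f₁ f₂ t} =
      Nat.card {t : V × V × V × V × V // t.1 = c ∧ IsBowtieThru G f₂ f₁ t} :=
  Nat.card_congr (Equiv.subtypeEquivRight fun _ => and_congr_right' isBowtieThru_comm)

def swapLeft : V × V × V × V × V → V × V × V × V × V
  | (c, a, b, d, e) => (c, b, a, d, e)

def swapRight : V × V × V × V × V → V × V × V × V × V
  | (c, a, b, d, e) => (c, a, b, e, d)

def swapTriangles : V × V × V × V × V → V × V × V × V × V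
  | (c, a, b, d, e) => (c, d, e, a, b)

def reorient (σ : Bool × Bool × Bool) (t : V × V × V × V × V) : V × V × V × V × V :=
  cond σ.2.2 swapTriangles id (cond σ.2.1 swapRight id (cond σ.1 swapLeft id t))

theorem reorient_induction {P : V × V × V × V × V → Prop}
    (left : ∀ t, P t → P (swapLeft t)) (right : ∀ t, P t → P (swapRight t))
    (triangles : ∀ t, P t → P (swapTriangles t))
    (σ : Bool × Bool × Bool) {t : V × V × V × V × V} (ht : P t) : P (reorient σ t) := by
  have hcond : ∀ (b : Bool) (f : V × V × V × V × V → V × V × V × V × V),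
      (∀ t, P t → P (f t)) → ∀ t, P t → P (cond b f id t) := by
    rintro (_ | _) f hf t ht
    exacts [ht, hf t ht]
  exact hcond _ _ triangles _ (hcond _ _ right _ (hcond _ _ left _ ht))

theorem reorient_fst (σ : Bool × Bool × Bool) (t : V × V × V × V × V) :
    (reorient σ t).1 = t.1 :=
  reorient_induction (P := fun s => s.1 = t.1) (fun _ => id) (fun _ => id) (fun _ => id) σ rfl

theorem IsBowtieThru.reorient {f₁ f₂ : Sym2 V} {t : V × V × V × V × V}
    (h : IsBowtieThru G f₁ f₂ t) (σ : Bool × Bool × Bool) :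
    IsBowtieThru G f₁ f₂ (reorient σ t) := by
  refine reorient_induction ?_ ?_ ?_ σ h <;>
    rintro ⟨c, a, b, d, e⟩ ⟨hbt, h₁, h₂⟩
  · exact ⟨IsBowtie.swap_left_s8 hbt, btEdges_swap_left ▸ h₁, btEdges_swap_left ▸ h₂⟩
  · exact ⟨IsBowtie.swap_right_s8 hbt, btEdges_swap_right ▸ h₁, btEdges_swap_right ▸ h₂⟩
  · exact ⟨IsBowtie.swap_triangles_s8 hbt, btEdges_swap_triangles ▸ h₁, btEdges_swap_triangles ▸ h₂⟩

def verts (t : V × V × V × V × V) : Set V :=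
  {t.1, t.2.1, t.2.2.1, t.2.2.2.1, t.2.2.2.2}

theorem verts_reorient (σ : Bool × Bool × Bool) (t : V × V × V × V × V) :
    verts (reorient σ t) = verts t := by
  refine reorient_induction (P := fun s => verts s = verts t) ?_ ?_ ?_ σ rfl <;>
    rintro ⟨c, a, b, d, e⟩ h <;> rw [← h] <;> ext <;>
    simp only [verts, swapLeft, swapRight, swapTriangles, Set.mem_insert_iff,
      Set.mem_singleton_iff] <;>
    tauto

theorem _root_.IsBowtie.reorient_injective (h : IsBowtie G c a b d e) :
    Function.Injective fun σ => reorient σ (c, a, b, d, e) := by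
  obtain ⟨-, -, hab, -, -, hde, had, hae, hbd, hbe⟩ := h
  have := hab.ne
  have := hde.ne
  rintro ⟨_ | _, _ | _, _ | _⟩ ⟨_ | _, _ | _, _ | _⟩ hστ <;>
    simp_all [reorient, swapLeft, swapRight, swapTriangles, eq_comm]

theorem eight_mul_card_le_card_centred [Finite V] {c' : V} (X : Finset V)
    (hcc' : G.Adj c c') (hcd : G.Adj c d) (hce : G.Adj c e) (hde : G.Adj d e)
    (hc'd : c' ≠ d) (hc'e : c' ≠ e)
    (hX : ∀ x ∈ X, G.Adj c x ∧ G.Adj c' x ∧ x ≠ d ∧ x ≠ e) :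
    8 * #X ≤ Nat.card {t : V × V × V × V × V // t.1 = c ∧ IsBowtieThru G s(c, c') s(d, e) t} := by
  have hbowtie : ∀ x ∈ X, IsBowtie G c c' x d e := fun x hx =>
    let ⟨hcx, hc'x, hxd, hxe⟩ := hX x hx
    ⟨hcc', hcx, hc'x, hcd, hce, hde, hc'd, hc'e, hxd, hxe⟩
  have hthru : ∀ x ∈ X, IsBowtieThru G s(c, c') s(d, e) (c, c', x, d, e) := fun x hx =>
    ⟨hbowtie x hx, by simp [btEdges], by simp [btEdges]⟩
  let f : (Bool × Bool × Bool) × X →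
      {t : V × V × V × V × V // t.1 = c ∧ IsBowtieThru G s(c, c') s(d, e) t} :=
    fun σx => ⟨reorient σx.1 (c, c', σx.2, d, e), reorient_fst _ _,
      (hthru σx.2 σx.2.2).reorient σx.1⟩
  have hf : Function.Injective f := by
    rintro ⟨σ, x, hx⟩ ⟨τ, y, hy⟩ hστ
    have hreorient : reorient σ (c, c', x, d, e) = reorient τ (c, c', y, d, e) :=
      congrArg Subtype.val hστ
    have hxy : x = y := by
      have hmem : x ∈ verts (c, c', y, d, e) := by
        rw [← verts_reorient τ, ← hreorient, verts_reorient]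
        simp [verts]
      obtain ⟨hcx, hc'x, hxd, hxe⟩ := hX x hx
      simp only [verts, Set.mem_insert_iff, Set.mem_singleton_iff] at hmem
      rcases hmem with rfl | rfl | rfl | rfl | rfl
      exacts [(hcx.ne rfl).elim, (hc'x.ne rfl).elim, rfl, (hxd rfl).elim, (hxe rfl).elim]
    subst hxy
    rw [(hbowtie x hx).reorient_injective hreorient]
  calc 8 * #X = Nat.card ((Bool × Bool × Bool) × X) := by simp
    _ ≤ _ := Nat.card_le_card_of_injective f hf

theorem eight_mul_card_compl_sub_two_le [Fintype V] [DecidableEq V] (V₁ : Finset V)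
    (hcross : ∀ u v : V, u ∈ V₁ → v ∉ V₁ → G.Adj u v) {w₁ w₂ u₁ u₂ : V}
    (hw₁ : w₁ ∈ V₁) (hw₂ : w₂ ∈ V₁) (hu₁ : u₁ ∉ V₁) (hu₂ : u₂ ∉ V₁)
    (hw : G.Adj w₁ w₂) (hu : G.Adj u₁ u₂) :
    8 * (#V₁ᶜ - 2) ≤
      Nat.card {t : V × V × V × V × V // t.1 = w₁ ∧ IsBowtieThru G s(w₁, w₂) s(u₁, u₂) t} := by
  refine le_trans ?_ (eight_mul_card_le_card_centred (V₁ᶜ \ {u₁, u₂}) hw (hcross _ _ hw₁ hu₁)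
    (hcross _ _ hw₁ hu₂) hu (ne_of_mem_of_not_mem hw₂ hu₁)
    (ne_of_mem_of_not_mem hw₂ hu₂) fun x hx => ?_)
  · exact Nat.mul_le_mul_left 8 ((Nat.sub_le_sub_left card_le_two _).trans (le_card_sdiff _ _))
  · simp only [mem_sdiff, mem_compl, mem_insert, mem_singleton, not_or] at hx
    exact ⟨hcross _ _ hw₁ hx.1, hcross _ _ hw₂ hx.1, hx.2⟩

end Bowtie

open Bowtie

theorem bowties_through_opposite_pair {V : Type*} [Fintype V] [DecidableEq V]
    (G : SimpleGraph V) (V₁ : Finset V)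
    (hcross : ∀ u v : V, u ∈ V₁ → v ∉ V₁ → G.Adj u v)
    (w₁ w₂ u₁ u₂ : V)
    (hw₁ : w₁ ∈ V₁) (hw₂ : w₂ ∈ V₁) (hu₁ : u₁ ∉ V₁) (hu₂ : u₂ ∉ V₁)
    (hw : G.Adj w₁ w₂) (hu : G.Adj u₁ u₂) :
    2 * (Fintype.card V - 4) ≤ bowtieCountThru2 G s(w₁, w₂) s(u₁, u₂) := by
  have hcross' : ∀ u v : V, u ∈ V₁ᶜ → v ∉ V₁ᶜ → G.Adj u v := by
    simp only [mem_compl, not_not]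
    exact fun u v hu hv => (hcross v u hv hu).symm
  have h₁ := eight_mul_card_compl_sub_two_le V₁ hcross hw₁ hw₂ hu₁ hu₂ hw hu
  have h₂ := eight_mul_card_compl_sub_two_le V₁ hcross hw₂ hw₁ hu₁ hu₂ hw.symm hu
  have h₃ := eight_mul_card_compl_sub_two_le V₁ᶜ hcross' (by simpa) (by simpa) (by simpa)
    (by simpa) hu hw
  have h₄ := eight_mul_card_compl_sub_two_le V₁ᶜ hcross' (by simpa) (by simpa) (by simpa)
    (by simpa) hu.symm hw
  rw [Sym2.eq_swap (a := w₂)] at h₂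
  rw [Sym2.eq_swap (a := u₂)] at h₄
  rw [compl_compl, card_centred_comm] at h₃ h₄
  have hsum := sum_card_fst_eq_le_card (IsBowtieThru G s(w₁, w₂) s(u₁, u₂)) {w₁, w₂, u₁, u₂}
  rw [sum_insert (by simp [hw.ne, ne_of_mem_of_not_mem hw₁ hu₁, ne_of_mem_of_not_mem hw₁ hu₂]),
    sum_insert (by simp [ne_of_mem_of_not_mem hw₂ hu₁, ne_of_mem_of_not_mem hw₂ hu₂]),
    sum_insert (by simpa using hu.ne), sum_singleton] at hsum
  have hcard := card_add_card_compl V₁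
  rw [bowtieCountThru2_eq, Nat.le_div_iff_mul_le (by norm_num)]
  omega
end

section
/- Let H be a graph on n vertices (n large) with vertex set partitioned into V₁, V₂ of sizes within 2εn of n/2 for small ε > 0, with all cross edges present, and let B be the set of edges inside the parts with |B| = b ≤ ε²n². If some vertex v has at least 5ε^{2/3}n neighbours inside its own part via edges of B, then some edge of H is contained in more than 13bn bowties. -/
open Finset

/-!
Let `v` be a vertex with many neighbours in its own part and `w` one of them. Every other
same-part neighbour `a` of `v` and every ordered pair `y ≠ y'` of vertices of the opposite part
give a bowtie with centre `v` and triangles `v w y`, `v a y'`, since all cross edges are present.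
These `(d - 1) · m (m - 1)` choices, with `d ≥ 5 ε^{2/3} n` and `m ≥ (1/2 - 2ε) n`, give
order `ε^{2/3} n³` bowties through the edge `vw`, which beats `13 b n ≤ 13 ε² n³` because
`ε² ≤ ε^{2/3} · ε`.
-/

variable {V : Type*}

lemma sameDeg_eq_card_filter [Fintype V] [DecidableEq V] (G : SimpleGraph V) [DecidableRel G.Adj]
    (S : Finset V) (v : V) : sameDeg G S v = #{w | G.Adj v w ∧ (w ∈ S ↔ v ∈ S)} := by
  rw [sameDeg, Nat.card_eq_fintype_card, Fintype.card_subtype]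

lemma adj_of_not_mem_iff_mem {G : SimpleGraph V} {S : Finset V}
    (hcross : ∀ u v, u ∈ S → v ∉ S → G.Adj u v) {a y : V} (h : ¬(a ∈ S ↔ y ∈ S)) :
    G.Adj a y := by
  by_cases ha : a ∈ S
  · exact hcross a y ha fun hy => h (iff_of_true ha hy)
  · exact (hcross y a (by tauto) ha).symm

lemma card_mul_card_offDiag_div_le_bowtieCountThru1 [Finite V] [DecidableEq V]
    {G : SimpleGraph V} {v w : V} (hvw : G.Adj v w) {A Y : Finset V}
    (hA : ∀ a ∈ A, G.Adj v a) (hwA : w ∉ A) (hY : ∀ y ∈ Y, G.Adj v y ∧ G.Adj w y)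
    (hAY : ∀ a ∈ A, ∀ y ∈ Y, G.Adj a y) :
    #A * #Y.offDiag / 8 ≤ bowtieCountThru1 G s(v, w) := by
  rw [← card_product, ← Nat.card_eq_finsetCard, bowtieCountThru1]
  refine Nat.div_le_div_right (Nat.card_le_card_of_injective
    (fun p => ⟨(v, w, p.1.2.1, p.1.1, p.1.2.2), ?_⟩) ?_)
  · obtain ⟨⟨a, y, y'⟩, hp⟩ := p
    simp only [mem_product, mem_offDiag] at hp
    obtain ⟨ha, hy, hy', hyy'⟩ := hp
    refine ⟨⟨hvw, (hY y hy).1, (hY y hy).2, hA a ha, (hY y' hy').1, hAY a ha y' hy',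
      fun h : w = a => hwA (h ▸ ha), (hY y' hy').2.ne, fun h => (hAY a ha y hy).ne h.symm,
      hyy'⟩, by simp [btEdges]⟩
  · rintro ⟨⟨a, y, y'⟩, _⟩ ⟨⟨a', z, z'⟩, _⟩ h
    simp only [Subtype.mk.injEq, Prod.mk.injEq] at h
    obtain ⟨-, -, rfl, rfl, rfl⟩ := h
    rfl

lemma exists_opposite_part_card_ge [Fintype V] [DecidableEq V] {S : Finset V} {c : ℝ}
    (hS : c ≤ #S) (hSc : c ≤ #Sᶜ) (v : V) :
    ∃ Y : Finset V, c ≤ #Y ∧ ∀ y ∈ Y, ¬(y ∈ S ↔ v ∈ S) := by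
  by_cases hv : v ∈ S
  · exact ⟨Sᶜ, hSc, by simp_all⟩
  · exact ⟨S, hS, by simp_all⟩

lemma exists_adj_sameDeg_sub_one_mul_card_offDiag_div_le [Fintype V] [DecidableEq V]
    {G : SimpleGraph V} {S : Finset V} (hcross : ∀ u v, u ∈ S → v ∉ S → G.Adj u v) {v : V}
    (hv : 0 < sameDeg G S v) {Y : Finset V} (hY : ∀ y ∈ Y, ¬(y ∈ S ↔ v ∈ S)) :
    ∃ w, G.Adj v w ∧ (sameDeg G S v - 1) * #Y.offDiag / 8 ≤ bowtieCountThru1 G s(v, w) := by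
  classical
  rw [sameDeg_eq_card_filter] at hv ⊢
  set W : Finset V := {w | G.Adj v w ∧ (w ∈ S ↔ v ∈ S)}
  obtain ⟨w, hw⟩ := card_pos.mp hv
  have hcrossv : ∀ a, (a ∈ S ↔ v ∈ S) → ∀ y ∈ Y, G.Adj a y := fun a ha y hy =>
    adj_of_not_mem_iff_mem hcross fun h => hY y hy (h.symm.trans ha)
  refine ⟨w, (mem_filter.mp hw).2.1, ?_⟩
  rw [← card_erase_of_mem hw]
  exact card_mul_card_offDiag_div_le_bowtieCountThru1 (mem_filter.mp hw).2.1
    (fun a ha => (mem_filter.mp (mem_of_mem_erase ha)).2.1) (notMem_erase w W)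
    (fun y hy => ⟨hcrossv v Iff.rfl y hy, hcrossv w (mem_filter.mp hw).2.2 y hy⟩)
    (fun a ha => hcrossv a (mem_filter.mp (mem_of_mem_erase ha)).2.2)

lemma sq_le_rpow_two_thirds_mul {ε : ℝ} (hε0 : 0 ≤ ε) (hε1 : ε ≤ 1) :
    ε ^ 2 ≤ ε ^ ((2 : ℝ) / 3) * ε := by
  have hsplit : ε ^ 2 = ε ^ ((2 : ℝ) / 3) * ε ^ ((4 : ℝ) / 3) := by
    rw [← Real.rpow_add' hε0 (by norm_num)]
    norm_num
  rw [hsplit]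
  gcongr
  simpa using
    Real.rpow_le_rpow_of_exponent_ge' hε0 hε1 zero_le_one (by norm_num : (1 : ℝ) ≤ 4 / 3)

lemma bowtie_count_bound {ε x n b A O : ℝ} (hε : ε ≤ 1 / 1000)
    (hεx : ε ^ 2 ≤ x * ε) (hn : 8 ≤ n) (hxn : 1 ≤ x * n) (hA : 5 * x * n - 1 ≤ A)
    (hO : n / 2 - 2 * ε * n ≤ O) (hb : b ≤ ε ^ 2 * n ^ 2) :
    104 * b * n + 8 ≤ A * (O * O - O) := by
  have hxn3 : 64 ≤ x * n ^ 3 := by nlinarith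
  have hO' : 3 * n / 8 ≤ O := by nlinarith
  have hprod : 3 / 8 * (x * n ^ 3) ≤ A * (O * O - O) :=
    calc 3 / 8 * (x * n ^ 3) = (4 * x * n) * ((3 * n / 8) * (n / 4)) := by ring
      _ ≤ A * (O * (O - 1)) := by gcongr <;> nlinarith
      _ = A * (O * O - O) := by ring
  have hbn : 104 * b * n ≤ 104 * ε * (x * n ^ 3) :=
    calc 104 * b * n ≤ 104 * (ε ^ 2 * n ^ 2) * n := by gcongr
      _ ≤ 104 * (x * ε * n ^ 2) * n := by gcongr
      _ = 104 * ε * (x * n ^ 3) := by ring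
  nlinarith

theorem edge_in_many_bowties_of_large_bad_degree :
    ∃ ε₀ : ℝ, 0 < ε₀ ∧ ∀ ε : ℝ, 0 < ε → ε ≤ ε₀ →
      ∃ N : ℕ, ∀ n : ℕ, N ≤ n → ∀ G : SimpleGraph (Fin n), ∀ V₁ : Finset (Fin n),
        |(V₁.card : ℝ) - n / 2| ≤ 2 * ε * n →
        |(V₁ᶜ.card : ℝ) - n / 2| ≤ 2 * ε * n →
        (∀ u v : Fin n, u ∈ V₁ → v ∉ V₁ → G.Adj u v) →
        ((insideEdges G V₁ + insideEdges G V₁ᶜ : ℕ) : ℝ) ≤ ε ^ 2 * n ^ 2 →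
        (∃ v : Fin n, 5 * ε ^ ((2 : ℝ) / 3) * n ≤ (sameDeg G V₁ v : ℝ)) →
        ∃ f ∈ G.edgeSet,
          13 * ((insideEdges G V₁ + insideEdges G V₁ᶜ : ℕ) : ℝ) * n
            < (bowtieCountThru1 G f : ℝ) := by
  refine ⟨1 / 1000, by norm_num, fun ε hε0 hε => ?_⟩
  set x := ε ^ ((2 : ℝ) / 3)
  have hx : 0 < x := Real.rpow_pos_of_pos hε0 _
  refine ⟨max 8 ⌈x⁻¹⌉₊, fun n hn G V₁ hV₁ hV₁c hcross hb ⟨v, hv⟩ => ?_⟩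
  have hn8 : (8 : ℝ) ≤ n := by exact_mod_cast le_of_max_le_left hn
  have hxn : 1 ≤ x * n := by
    rw [← inv_mul_le_iff₀ hx, mul_one]
    exact (Nat.le_ceil _).trans (by exact_mod_cast le_of_max_le_right hn)
  have hv0 : 0 < sameDeg G V₁ v := by
    exact_mod_cast (by positivity : (0 : ℝ) < 5 * x * n).trans_le hv
  obtain ⟨Y, hY, hYopp⟩ := exists_opposite_part_card_ge (S := V₁) (c := n / 2 - 2 * ε * n)
    (by linarith [(abs_le.mp hV₁).1]) (by linarith [(abs_le.mp hV₁c).1]) v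
  obtain ⟨w, hvw, hcount⟩ := exists_adj_sameDeg_sub_one_mul_card_offDiag_div_le hcross hv0 hYopp
  refine ⟨s(v, w), hvw, lt_of_lt_of_le ?_ (Nat.cast_le.mpr hcount)⟩
  have hbound := bowtie_count_bound hε (sq_le_rpow_two_thirds_mul hε0.le (by linarith)) hn8 hxn
    (A := ((sameDeg G V₁ v - 1 : ℕ) : ℝ)) (by rw [Nat.cast_pred hv0]; linarith) hY hb
  rw [← Nat.cast_ofNat, ← Nat.cast_mul, ← Nat.cast_mul, Nat.cast_lt, Nat.lt_iff_add_one_le,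
    Nat.le_div_iff_mul_le (by norm_num), ← Nat.cast_le (α := ℝ), offDiag_card]
  push_cast [Nat.le_mul_self] at hbound ⊢
  linarith
end
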